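/- arXiv:2403.19663 — 4 statements merged into one kernel-verified Lean document; each statement's English description precedes it below -/
import Mathlib

section
/- There is exactly one conic through five points of ℙ²(ℂ) in general position: if v₁, …, v₅ ∈ ℂ³ are vectors such that any three of them are linearly independent (so the corresponding five points of ℙ² are pairwise distinct with no three collinear), then the set of homogeneous polynomials of degree 2 in three variables over ℂ vanishing at each of v₁, …, v₅ is a linear subspace of dimension exactly 1. -/
/-!
The conics through the five points form the kernel of the evaluation map from the
6-dimensional space of quadratic forms on `ℂ³` to `ℂ⁵`. This map is surjective: for each
point, the union of the two lines joining the other four points in pairs is a conic through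
those four which misses the fifth, because no three of the points are collinear.
Hence the kernel has dimension `6 - 5 = 1`.
-/

open MvPolynomial Matrix

namespace MvPolynomial

variable {σ R : Type*}

instance [CommSemiring R] [Finite σ] (n : ℕ) : Module.Finite R (homogeneousSubmodule σ R n) :=
  Module.Finite.iff_fg.mpr (homogeneousSubmodule_fg σ R n)

theorem finrank_homogeneousSubmodule [CommRing R] [StrongRankCondition R] [Fintype σ] (n : ℕ) :
    Module.finrank R (homogeneousSubmodule σ R n) = (Fintype.card σ + n - 1).choose n := by
  classical
  have hdeg : {d : σ →₀ ℕ | d.degree = n} = ↑((Finset.univ : Finset σ).finsuppAntidiag n) := by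
    ext d
    simp [Finsupp.degree_eq_sum]
  rw [homogeneousSubmodule_eq_finsupp_supported, hdeg]
  refine (Module.finrank_eq_card_basis (basisRestrictSupport R _)).trans ?_
  simp [Finset.card_finsuppAntidiag_nat_eq_choose]

variable [CommSemiring R] [Fintype σ]

noncomputable def linearForm (w : σ → R) : MvPolynomial σ R :=
  ∑ i, C (w i) * X i

theorem isHomogeneous_linearForm (w : σ → R) : (linearForm w).IsHomogeneous 1 :=
  IsHomogeneous.sum _ _ _ fun i _ => by
    simpa using (isHomogeneous_C σ (w i)).mul (isHomogeneous_X R i)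

@[simp]
theorem aeval_linearForm (w x : σ → R) : aeval x (linearForm w) = w ⬝ᵥ x := by
  simp [linearForm, dotProduct]

end MvPolynomial

theorem linearIndependent_comp_of_forall_card_eq {K M ι : Type*} [Ring K] [AddCommGroup M]
    [Module K M] {n : ℕ} {v : ι → M}
    (hv : ∀ s : Finset ι, s.card = n → LinearIndependent K (fun i : s => v i))
    {f : Fin n → ι} (hf : f.Injective) : LinearIndependent K (v ∘ f) := by
  classical
  refine (hv (Finset.univ.image f) (by simp [Finset.card_image_of_injective _ hf])).comp
    (fun k => ⟨f k, Finset.mem_image_of_mem _ (Finset.mem_univ k)⟩) fun k l hkl => ?_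
  exact hf (congrArg Subtype.val hkl)

theorem LinearMap.range_eq_top_of_forall_exists_single {K M ι : Type*} [Field K] [AddCommGroup M]
    [Module K M] [Finite ι] (L : M →ₗ[K] ι → K)
    (hL : ∀ i, ∃ p, L p i ≠ 0 ∧ ∀ j ≠ i, L p j = 0) : range L = ⊤ := by
  classical
  rw [eq_top_iff, ← (Pi.basisFun K ι).span_eq, Submodule.span_le]
  rintro _ ⟨i, rfl⟩
  obtain ⟨p, hpi, hpj⟩ := hL i
  have hp : L p = Pi.single i (L p i) := by
    ext j
    by_cases hji : j = i
    · subst hji; simp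
    · simp [hpj j hji, hji]
  refine ⟨(L p i)⁻¹ • p, ?_⟩
  rw [map_smul, hp]
  simp [← Pi.single_smul, hpi]

theorem finrank_inf_iInf_ker_add_card {K M ι : Type*} [Field K] [AddCommGroup M] [Module K M]
    [Fintype ι] (V : Submodule K M) [FiniteDimensional K V] (f : ι → M →ₗ[K] K)
    (hf : ∀ i, ∃ p ∈ V, f i p ≠ 0 ∧ ∀ j ≠ i, f j p = 0) :
    Module.finrank K ↥(V ⊓ ⨅ i, LinearMap.ker (f i)) + Fintype.card ι = Module.finrank K V := by
  let L : V →ₗ[K] ι → K := LinearMap.pi fun i => f i ∘ₗ V.subtype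
  have hker : V ⊓ ⨅ i, LinearMap.ker (f i) = (LinearMap.ker L).map V.subtype := by
    simp only [L, LinearMap.ker_pi, LinearMap.ker_comp, ← Submodule.comap_iInf,
      Submodule.map_comap_subtype]
  have hrange : LinearMap.range L = ⊤ := L.range_eq_top_of_forall_exists_single fun i => by
    obtain ⟨p, hpV, hp⟩ := hf i
    exact ⟨⟨p, hpV⟩, hp⟩
  rw [hker, Submodule.finrank_map_subtype_eq, ← L.finrank_range_add_finrank_ker, hrange,
    finrank_top, Module.finrank_pi, add_comm]

theorem det_ne_zero_of_forall_card_eq_three {K ι : Type*} [Field K] {v : ι → Fin 3 → K}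
    (hv : ∀ s : Finset ι, s.card = 3 → LinearIndependent K (fun i : s => v i))
    {a b c : ι} (hab : a ≠ b) (hac : a ≠ c) (hbc : b ≠ c) : det ![v a, v b, v c] ≠ 0 := by
  have hinj : Function.Injective ![a, b, c] := by
    intro k l
    fin_cases k <;> fin_cases l <;> simp [hab, hac, hbc, hab.symm, hac.symm, hbc.symm]
  have hrows : v ∘ ![a, b, c] = ![v a, v b, v c] := by
    ext k : 1
    fin_cases k <;> rfl
  have hli := linearIndependent_comp_of_forall_card_eq hv hinj
  rw [hrows] at hli
  exact ((isUnit_iff_isUnit_det _).mp (linearIndependent_rows_iff_isUnit.mp hli)).ne_zero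

theorem exists_conic_through_all_but {K : Type*} [Field K] {v : Fin 5 → Fin 3 → K}
    (hv : ∀ s : Finset (Fin 5), s.card = 3 → LinearIndependent K (fun i : s => v i)) (i : Fin 5) :
    ∃ p ∈ homogeneousSubmodule (Fin 3) K 2, aeval (v i) p ≠ 0 ∧ ∀ j ≠ i, aeval (v j) p = 0 := by
  -- `linearForm (a ⨯₃ b)` is `x ↦ det ![x, a, b]`, the line through `a` and `b`.
  let line (a b : Fin 5) := linearForm (v (i + a) ⨯₃ v (i + b))
  refine ⟨line 1 2 * line 3 4,
    (isHomogeneous_linearForm _).mul (isHomogeneous_linearForm _), ?_, fun j hj => ?_⟩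
  · have hline (a b : Fin 5) (ha : a ≠ 0) (hb : b ≠ 0) (hab : a ≠ b) :
        aeval (v i) (line a b) ≠ 0 := by
      rw [aeval_linearForm, dotProduct_comm, triple_product_eq_det]
      exact det_ne_zero_of_forall_card_eq_three hv (by simpa using ha)
        (by simpa using hb) (by simpa using hab)
    rw [map_mul]
    exact mul_ne_zero (hline 1 2 (by decide) (by decide) (by decide))
      (hline 3 4 (by decide) (by decide) (by decide))
  · obtain ⟨a, ha, rfl⟩ : ∃ a, a ≠ 0 ∧ j = i + a := ⟨j - i, sub_ne_zero.mpr hj, by abel⟩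
    obtain rfl | rfl | rfl | rfl : a = 1 ∨ a = 2 ∨ a = 3 ∨ a = 4 := by omega
    all_goals simp only [line, map_mul, aeval_linearForm, dotProduct_comm (_ ⨯₃ _), dot_self_cross,
      dot_cross_self, zero_mul, mul_zero]

/-- There is exactly one conic through five points of `ℙ²(ℂ)` in general position:
if `v₁, …, v₅ ∈ ℂ³` are such that any three of them are linearly independent, then
the space of homogeneous polynomials of degree 2 in three variables vanishing at
each `vᵢ` has dimension exactly 1.  This is the statement `N₂ = 1`. -/
theorem unique_conic_through_five_general_points
    (v : Fin 5 → (Fin 3 → ℂ))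
    (hgen : ∀ s : Finset (Fin 5), s.card = 3 →
      LinearIndependent ℂ (fun i : {x : Fin 5 // x ∈ s} => v i.1)) :
    Module.finrank ℂ
      ↥(MvPolynomial.homogeneousSubmodule (Fin 3) ℂ 2 ⊓
        ⨅ i : Fin 5, LinearMap.ker
          ((MvPolynomial.aeval (v i) : MvPolynomial (Fin 3) ℂ →ₐ[ℂ] ℂ).toLinearMap)) = 1 := by
  have h := finrank_inf_iInf_ker_add_card _ (fun i => (aeval (v i)).toLinearMap)
    (exists_conic_through_all_but hgen)
  rw [finrank_homogeneousSubmodule, Fintype.card_fin, Fintype.card_fin] at h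
  have h6 : (3 + 2 - 1).choose 2 = 6 := rfl
  omega
end

section
/- A sequence N : ℕ → ℚ satisfies Kontsevich's recursion for ℙ² at every degree d ≥ 2 if and only if the four formal power series Γ₁₁₁ = ∑_{d≥1} d³·N d·X^{3d−1}/(3d−1)!, Γ₁₁₂ = ∑_{d≥1} d²·N d·X^{3d−2}/(3d−2)!, Γ₁₂₂ = ∑_{d≥1} d·N d·X^{3d−3}/(3d−3)!, and Γ₂₂₂ = ∑_{d≥2} N d·X^{3d−4}/(3d−4)! in ℚ⟦X⟧ satisfy the WDVV equation Γ₂₂₂ + Γ₁₁₁·Γ₁₂₂ = Γ₁₁₂·Γ₁₁₂. -/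
open Finset PowerSeries

/-- Kontsevich's recursion relation for `ℙ²` at degree `d`:
`N d + ∑ C(3d-4, 3dA-1)·dA³·dB·(N dA)·(N dB) = ∑ C(3d-4, 3dA-2)·dA²·dB²·(N dA)·(N dB)`,
both sums over pairs `(dA, dB)` of positive integers with `dA + dB = d`. -/
def KontsevichRelP2 (N : ℕ → ℚ) (d : ℕ) : Prop :=
  N d + ∑ dA ∈ Finset.Ico 1 d,
      ((3 * d - 4).choose (3 * dA - 1) : ℚ) * (dA : ℚ) ^ 3 * ((d - dA : ℕ) : ℚ) *
        N dA * N (d - dA)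
    = ∑ dA ∈ Finset.Ico 1 d,
      ((3 * d - 4).choose (3 * dA - 2) : ℚ) * (dA : ℚ) ^ 2 * ((d - dA : ℕ) : ℚ) ^ 2 *
        N dA * N (d - dA)

/-- `Γ₁₁₁ = ∑_{d≥1} d³·N d·X^{3d−1}/(3d−1)!`. -/
noncomputable def Gamma111 (N : ℕ → ℚ) : PowerSeries ℚ :=
  PowerSeries.mk fun n =>
    ∑ d ∈ (Finset.range (n + 2)).filter (fun d => 1 ≤ d ∧ 3 * d - 1 = n),
      (d : ℚ) ^ 3 * N d / (Nat.factorial n : ℚ)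

/-- `Γ₁₁₂ = ∑_{d≥1} d²·N d·X^{3d−2}/(3d−2)!`. -/
noncomputable def Gamma112 (N : ℕ → ℚ) : PowerSeries ℚ :=
  PowerSeries.mk fun n =>
    ∑ d ∈ (Finset.range (n + 2)).filter (fun d => 1 ≤ d ∧ 3 * d - 2 = n),
      (d : ℚ) ^ 2 * N d / (Nat.factorial n : ℚ)

/-- `Γ₁₂₂ = ∑_{d≥1} d·N d·X^{3d−3}/(3d−3)!`. -/
noncomputable def Gamma122 (N : ℕ → ℚ) : PowerSeries ℚ :=
  PowerSeries.mk fun n =>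
    ∑ d ∈ (Finset.range (n + 2)).filter (fun d => 1 ≤ d ∧ 3 * d - 3 = n),
      (d : ℚ) * N d / (Nat.factorial n : ℚ)

/-- `Γ₂₂₂ = ∑_{d≥2} N d·X^{3d−4}/(3d−4)!`. -/
noncomputable def Gamma222 (N : ℕ → ℚ) : PowerSeries ℚ :=
  PowerSeries.mk fun n =>
    ∑ d ∈ (Finset.range (n + 2)).filter (fun d => 2 ≤ d ∧ 3 * d - 4 = n),
      N d / (Nat.factorial n : ℚ)

/-!
All four series are exponential generating series whose exponents lie in a single residue class
mod 3, so both sides of the WDVV equation live on exponents `≡ 2 (mod 3)`. Multiplying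
`X^a/a!` by `X^b/b!` gives `C(a+b, a)·X^(a+b)/(a+b)!`, so the coefficient of `X^(3d-4)/(3d-4)!`
in `Γ₁₁₁·Γ₁₂₂` (resp. `Γ₁₁₂²`) is the binomial convolution over `dA + dB = d` appearing in
Kontsevich's recursion, and comparing it is the recursion at degree `d`.
-/

namespace PowerSeries

variable {R : Type*} [Semiring R]

theorem coeff_mul_eq_zero_of_mod_ne {f g : R⟦X⟧} {p r s n : ℕ}
    (hf : ∀ i, i % p ≠ r → coeff i f = 0) (hg : ∀ j, j % p ≠ s → coeff j g = 0)
    (hn : n % p ≠ (r + s) % p) : coeff n (f * g) = 0 := by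
  rw [coeff_mul]
  refine sum_eq_zero fun ⟨i, j⟩ hij => ?_
  rw [HasAntidiagonal.mem_antidiagonal] at hij
  by_cases hi : i % p = r
  · have hj : j % p ≠ s := fun hj => hn (by rw [← hij, Nat.add_mod, hi, hj])
    rw [hg j hj, mul_zero]
  · rw [hf i hi, zero_mul]

theorem coeff_mul_eq_sum_Ico_of_mod {f : R⟦X⟧} (g : R⟦X⟧) {u v : ℕ} (d : ℕ) (hu₀ : 0 < u)
    (hu : u < 3) (hv₀ : 0 < v) (hv : v ≤ 3) (hf : ∀ i, (i + u) % 3 ≠ 0 → coeff i f = 0) :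
    coeff (3 * d - (u + v)) (f * g) =
      ∑ a ∈ Ico 1 d, coeff (3 * a - u) f * coeff (3 * (d - a) - v) g := by
  rw [coeff_mul, Nat.sum_antidiagonal_eq_sum_range_succ_mk]
  have hsub : (Ico 1 d).image (fun a => 3 * a - u) ⊆ range (3 * d - (u + v) + 1) := by
    intro i hi
    simp only [mem_image, mem_Ico, mem_range] at hi ⊢
    omega
  rw [← sum_subset hsub, sum_image]
  · refine sum_congr rfl fun a ha => ?_
    rw [mem_Ico] at ha
    rw [show 3 * d - (u + v) - (3 * a - u) = 3 * (d - a) - v by omega]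
  · intro a ha b hb hab
    simp only [coe_Ico, Set.mem_Ico] at ha hb hab
    omega
  · intro i hi hi'
    simp only [mem_image, mem_Ico, mem_range, not_exists, not_and] at hi hi'
    rw [hf i fun h => hi' ((i + u) / 3) ⟨by omega, by omega⟩ (by omega), zero_mul]

end PowerSeries

theorem div_factorial_mul_div_factorial {K : Type*} [Field K] [CharZero K] (a b : ℕ) (x y : K) :
    x / a.factorial * (y / b.factorial) = (a + b).choose a * x * y / (a + b).factorial := by
  have ha : (a.factorial : K) ≠ 0 := Nat.cast_ne_zero.2 a.factorial_ne_zero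
  have hb : (b.factorial : K) ≠ 0 := Nat.cast_ne_zero.2 b.factorial_ne_zero
  have hab : ((a + b).factorial : K) ≠ 0 := Nat.cast_ne_zero.2 (a + b).factorial_ne_zero
  rw [Nat.cast_add_choose]
  field_simp

namespace Kontsevich

variable {K : Type*} [Field K]

/-- `∑_{d ≥ m} c d · X^(3d-k) / (3d-k)!`, the common shape of the four series `Γ`. -/
noncomputable def gammaSeries (c : ℕ → K) (m k : ℕ) : PowerSeries K :=
  PowerSeries.mk fun n =>
    ∑ d ∈ (Finset.range (n + 2)).filter (fun d => m ≤ d ∧ 3 * d - k = n),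
      c d / (Nat.factorial n : K)

theorem coeff_gammaSeries (c : ℕ → K) {m k d : ℕ} (hk : k ≤ 3 * m) (hk' : k ≤ 2 * m + 1)
    (hd : m ≤ d) : coeff (3 * d - k) (gammaSeries c m k) = c d / (3 * d - k).factorial := by
  rw [gammaSeries, coeff_mk, sum_eq_single_of_mem d (by simp only [mem_filter, mem_range, and_true]; omega)]
  intro e he hne
  simp only [mem_filter, mem_range] at he
  omega

theorem coeff_gammaSeries_eq_zero (c : ℕ → K) {m k n : ℕ} (hk : k ≤ 3 * m)
    (hn : (n + k) % 3 ≠ 0) : coeff n (gammaSeries c m k) = 0 := by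
  rw [gammaSeries, coeff_mk, filter_false_of_mem, sum_empty]
  intro e _ he
  omega

theorem coeff_gammaSeries_mul_gammaSeries [CharZero K] (a b : ℕ → K) {u v : ℕ} (d : ℕ)
    (hu₀ : 0 < u) (hu : u < 3) (huv : u + v = 4) :
    coeff (3 * d - 4) (gammaSeries a 1 u * gammaSeries b 1 v) =
      ∑ e ∈ Ico 1 d, ((3 * d - 4).choose (3 * e - u) : K) * a e * b (d - e) /
        (3 * d - 4).factorial := by
  rw [← huv, PowerSeries.coeff_mul_eq_sum_Ico_of_mod _ d hu₀ hu (by omega) (by omega)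
    fun i hi => coeff_gammaSeries_eq_zero a (by omega) hi]
  refine sum_congr rfl fun e he => ?_
  rw [mem_Ico] at he
  rw [coeff_gammaSeries a (by omega) (by omega) he.1,
    coeff_gammaSeries b (by omega) (by omega) (by omega : 1 ≤ d - e),
    div_factorial_mul_div_factorial,
    show 3 * e - u + (3 * (d - e) - v) = 3 * d - (u + v) by omega]

theorem coeff_gammaSeries_mul_gammaSeries_eq_zero (a b : ℕ → K) {u v n : ℕ} (hu : u ≤ 3)
    (hv : v ≤ 3) (huv : u + v = 4) (hn : n % 3 ≠ 2) :
    coeff n (gammaSeries a 1 u * gammaSeries b 1 v) = 0 :=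
  PowerSeries.coeff_mul_eq_zero_of_mod_ne (p := 3) (r := (3 - u) % 3) (s := (3 - v) % 3)
    (fun i hi => coeff_gammaSeries_eq_zero a hu (by omega))
    (fun j hj => coeff_gammaSeries_eq_zero b hv (by omega)) (by omega)

theorem gamma111_eq (N : ℕ → ℚ) : Gamma111 N = gammaSeries (fun d => (d : ℚ) ^ 3 * N d) 1 1 :=
  rfl

theorem gamma112_eq (N : ℕ → ℚ) : Gamma112 N = gammaSeries (fun d => (d : ℚ) ^ 2 * N d) 1 2 :=
  rfl

theorem gamma122_eq (N : ℕ → ℚ) : Gamma122 N = gammaSeries (fun d => (d : ℚ) * N d) 1 3 :=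
  rfl

theorem gamma222_eq (N : ℕ → ℚ) : Gamma222 N = gammaSeries N 2 4 :=
  rfl

theorem coeff_wdvv_lhs (N : ℕ → ℚ) {d : ℕ} (hd : 2 ≤ d) :
    coeff (3 * d - 4) (Gamma222 N + Gamma111 N * Gamma122 N) =
      (N d + ∑ dA ∈ Ico 1 d, ((3 * d - 4).choose (3 * dA - 1) : ℚ) * (dA : ℚ) ^ 3 *
        ((d - dA : ℕ) : ℚ) * N dA * N (d - dA)) / (3 * d - 4).factorial := by
  rw [map_add, gamma222_eq, coeff_gammaSeries N (by norm_num) (by norm_num) hd, gamma111_eq,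
    gamma122_eq, coeff_gammaSeries_mul_gammaSeries _ _ d one_pos (by norm_num) rfl, add_div,
    sum_div]
  exact congrArg _ (sum_congr rfl fun _ _ => by ring)

theorem coeff_wdvv_rhs (N : ℕ → ℚ) (d : ℕ) :
    coeff (3 * d - 4) (Gamma112 N * Gamma112 N) =
      (∑ dA ∈ Ico 1 d, ((3 * d - 4).choose (3 * dA - 2) : ℚ) * (dA : ℚ) ^ 2 *
        ((d - dA : ℕ) : ℚ) ^ 2 * N dA * N (d - dA)) / (3 * d - 4).factorial := by
  rw [gamma112_eq, coeff_gammaSeries_mul_gammaSeries _ _ d two_pos (by norm_num) rfl, sum_div]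
  exact sum_congr rfl fun _ _ => by ring

theorem kontsevichRelP2_iff_coeff_eq (N : ℕ → ℚ) {d : ℕ} (hd : 2 ≤ d) :
    KontsevichRelP2 N d ↔
      coeff (3 * d - 4) (Gamma222 N + Gamma111 N * Gamma122 N) =
        coeff (3 * d - 4) (Gamma112 N * Gamma112 N) := by
  rw [coeff_wdvv_lhs N hd, coeff_wdvv_rhs,
    div_left_inj' (Nat.cast_ne_zero.2 (Nat.factorial_ne_zero _)), KontsevichRelP2]

theorem coeff_wdvv_eq_zero (N : ℕ → ℚ) {n : ℕ} (hn : n % 3 ≠ 2) :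
    coeff n (Gamma222 N + Gamma111 N * Gamma122 N) = 0 ∧
      coeff n (Gamma112 N * Gamma112 N) = 0 := by
  rw [map_add, gamma222_eq, gamma111_eq, gamma122_eq, gamma112_eq,
    coeff_gammaSeries_eq_zero N (by norm_num) (by omega),
    coeff_gammaSeries_mul_gammaSeries_eq_zero _ _ (by norm_num) (by norm_num) rfl hn,
    coeff_gammaSeries_mul_gammaSeries_eq_zero _ _ (by norm_num) (by norm_num) rfl hn, add_zero]
  exact ⟨rfl, rfl⟩

end Kontsevich

open Kontsevich

/-- A sequence `N : ℕ → ℚ` satisfies Kontsevich's recursion for `ℙ²` at every degree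
`d ≥ 2` if and only if the third derivatives of the Gromov–Witten potential satisfy
the WDVV (associativity) equation `Γ₂₂₂ + Γ₁₁₁·Γ₁₂₂ = Γ₁₁₂·Γ₁₁₂`. -/
theorem kontsevich_p2_iff_wdvv (N : ℕ → ℚ) :
    (∀ d : ℕ, 2 ≤ d → KontsevichRelP2 N d) ↔
      Gamma222 N + Gamma111 N * Gamma122 N = Gamma112 N * Gamma112 N := by
  refine ⟨fun h => ?_, fun h d hd => (kontsevichRelP2_iff_coeff_eq N hd).2 (by rw [h])⟩
  ext n
  by_cases hn : n % 3 = 2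
  · obtain ⟨d, hd, rfl⟩ : ∃ d, 2 ≤ d ∧ 3 * d - 4 = n := ⟨(n + 4) / 3, by omega, by omega⟩
    exact (kontsevichRelP2_iff_coeff_eq N hd).1 (h d hd)
  · rw [(coeff_wdvv_eq_zero N hn).1, (coeff_wdvv_eq_zero N hn).2]
end

section
/- Let N be the unique function on pairs (d, e) of natural numbers with d + e ≥ 1 satisfying Kontsevich's recursion for ℙ¹×ℙ¹ with N(1,0) = N(0,1) = 1. Then N(d, 1) = 1 for every d ≥ 0; that is, there is exactly one rational curve of bidegree (d,1) through 2d+1 points in general position in ℙ¹×ℙ¹. -/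
open Finset

/-- A function `N : ℕ → ℕ → ℚ` (defined on bidegrees `(d,e)`) satisfies Kontsevich's
recursion for `ℙ¹×ℙ¹` if `N 1 0 = N 0 1 = 1` and, for every `(d,e)` with `d + e ≥ 2`,
`N(d,e) + ∑ C(2d+2e−4, 2dA+2eA−1)·dA·eA·(dA·eB + eA·dB)·N(dA,eA)·N(dB,eB)
       = ∑ C(2d+2e−4, 2dA+2eA−2)·dA·eB·(dA·eB + eA·dB)·N(dA,eA)·N(dB,eB)`,
both sums over decompositions `d = dA + dB`, `e = eA + eB` with `dA+eA ≥ 1`, `dB+eB ≥ 1`. -/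
def KontsevichRecursionP1xP1 (N : ℕ → ℕ → ℚ) : Prop :=
  N 1 0 = 1 ∧ N 0 1 = 1 ∧
  ∀ d e : ℕ, 2 ≤ d + e →
    N d e + ∑ p ∈ ((Finset.range (d + 1)) ×ˢ (Finset.range (e + 1))).filter
        (fun p => 1 ≤ p.1 + p.2 ∧ 1 ≤ (d - p.1) + (e - p.2)),
      ((2 * d + 2 * e - 4).choose (2 * p.1 + 2 * p.2 - 1) : ℚ) * (p.1 : ℚ) * (p.2 : ℚ) *
        ((p.1 : ℚ) * ((e - p.2 : ℕ) : ℚ) + (p.2 : ℚ) * ((d - p.1 : ℕ) : ℚ)) *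
        N p.1 p.2 * N (d - p.1) (e - p.2)
    = ∑ p ∈ ((Finset.range (d + 1)) ×ˢ (Finset.range (e + 1))).filter
        (fun p => 1 ≤ p.1 + p.2 ∧ 1 ≤ (d - p.1) + (e - p.2)),
      ((2 * d + 2 * e - 4).choose (2 * p.1 + 2 * p.2 - 2) : ℚ) * (p.1 : ℚ) * ((e - p.2 : ℕ) : ℚ) *
        ((p.1 : ℚ) * ((e - p.2 : ℕ) : ℚ) + (p.2 : ℚ) * ((d - p.1 : ℕ) : ℚ)) *
        N p.1 p.2 * N (d - p.1) (e - p.2)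

/-!
The recursion in bidegree `(d, 0)` has no nonzero terms besides `N(d, 0)`, so no curve of
bidegree `(d, 0)` with `d ≥ 2` is counted. In the recursion for bidegree `(d + 1, 1)` every
left-hand term carries the factor `eA` and every right-hand term the factor `eB`; the
remaining terms contain some `N(k, 0)` with `k ≥ 2`, except the left-hand splitting
`(d, 1) + (1, 0)`, whose binomial coefficient `C(2d - 2, 2d + 1)` vanishes, and the
right-hand splitting `(1, 0) + (d, 1)`, which gives `N(d + 1, 1) = N(1, 0) · N(d, 1)`.
-/

namespace KontsevichRecursionP1xP1

variable {N : ℕ → ℕ → ℚ}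

theorem apply_zero_right (hN : KontsevichRecursionP1xP1 N) {d : ℕ} (hd : 2 ≤ d) :
    N d 0 = 0 := by
  have h := hN.2.2 d 0 (by omega)
  rw [sum_eq_zero, sum_eq_zero] at h
  · linarith
  all_goals
    intro p hp
    have hp2 : p.2 = 0 := by simp only [mem_filter, mem_product, mem_range] at hp; omega
    simp [hp2]

theorem apply_succ_one (hN : KontsevichRecursionP1xP1 N) (d : ℕ) :
    N (d + 1) 1 = N d 1 := by
  have h := hN.2.2 (d + 1) 1 (by omega)
  rw [sum_eq_zero, sum_eq_single_of_mem (1, 0) (by simp)] at h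
  · simpa [hN.1] using h
  · intro p hp hne
    simp only [mem_filter, mem_product, mem_range] at hp
    obtain hp2 | hp2 : p.2 = 0 ∨ p.2 = 1 := by omega
    · have hp1 : 2 ≤ p.1 := by
        have : p.1 ≠ 1 := fun hp1 => hne (Prod.ext hp1 hp2)
        omega
      simp [hp2, hN.apply_zero_right hp1]
    · simp [hp2]
  · intro p hp
    simp only [mem_filter, mem_product, mem_range] at hp
    obtain hp2 | hp2 : p.2 = 0 ∨ p.2 = 1 := by omega
    · simp [hp2]
    · by_cases hp1 : p.1 = d
      · have hchoose : (2 * (d + 1) - 2).choose (2 * p.1 + 2 * p.2 - 1) = 0 :=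
          Nat.choose_eq_zero_of_lt (by omega)
        simp [hchoose]
      · simp [hp2, hN.apply_zero_right (show 2 ≤ d + 1 - p.1 by omega)]

end KontsevichRecursionP1xP1

/-- There is exactly one rational curve of bidegree `(d,1)` through `2d+1` points in
general position in `ℙ¹×ℙ¹`: `N(d,1) = 1` for every `d ≥ 0`. -/
theorem kontsevich_p1xp1_Nd1 (N : ℕ → ℕ → ℚ) (hN : KontsevichRecursionP1xP1 N) :
    ∀ d : ℕ, N d 1 = 1 := by
  intro d
  induction d with
  | zero => exact hN.2.1
  | succ d ih => rw [hN.apply_succ_one, ih]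
end

section
/- Let N be a function on pairs (d, e) of natural numbers with d + e ≥ 1 satisfying Kontsevich's recursion for ℙ¹×ℙ¹ with N(1,0) = N(0,1) = 1. Define the multivariate formal power series Γ in three variables x₁, x₂, x₃ over ℚ whose coefficient of x₁^a x₂^b x₃^c is ∑ N(d,e)·e^a·d^b / (a!·b!·c!), the sum ranging over the (finitely many) pairs (d,e) with d+e ≥ 1 and 2(d+e)−1 = c (so that Γ = ∑_{d+e≥1} N(d,e)·x₃^{2(d+e)−1}/(2(d+e)−1)!·exp(e·x₁ + d·x₂)), and let Γ_{ijk} denote the third formal partial derivatives ∂³Γ/∂x_i∂x_j∂x_k. Then the WDVV equation holds: Γ₃₃₃ + Γ₁₁₂·Γ₂₃₃ + Γ₁₂₂·Γ₁₃₃ = Γ₁₂₃·Γ₁₂₃ + Γ₂₂₃·Γ₁₁₃. -/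
open Finset

/-- Formal partial derivative of a multivariate formal power series in three variables
with respect to the `i`-th variable. -/
noncomputable def mvPDeriv (i : Fin 3) (f : MvPowerSeries (Fin 3) ℚ) :
    MvPowerSeries (Fin 3) ℚ :=
  fun m => ((m i + 1 : ℕ) : ℚ) *
    MvPowerSeries.coeff (m + Finsupp.single i 1) f

/-- The quantum part of the Gromov–Witten potential of `ℙ¹×ℙ¹`:
`Γ = ∑_{d+e≥1} N(d,e)·x₃^{2(d+e)−1}/(2(d+e)−1)!·exp(e·x₁ + d·x₂)`, i.e. the coefficient
of `x₁^a x₂^b x₃^c` is `∑ N(d,e)·e^a·d^b/(a!·b!·c!)`, the sum over the pairs `(d,e)`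
with `d+e ≥ 1` and `2(d+e)−1 = c`. -/
noncomputable def GammaP1xP1 (N : ℕ → ℕ → ℚ) : MvPowerSeries (Fin 3) ℚ :=
  fun m => ∑ p ∈ ((Finset.range (m 2 + 2)) ×ˢ (Finset.range (m 2 + 2))).filter
      (fun p => 1 ≤ p.1 + p.2 ∧ 2 * (p.1 + p.2) - 1 = m 2),
    N p.1 p.2 * (p.2 : ℚ) ^ (m 0) * (p.1 : ℚ) ^ (m 1) /
      ((Nat.factorial (m 0) : ℚ) * (Nat.factorial (m 1) : ℚ) * (Nat.factorial (m 2) : ℚ))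

/-!
Γ is an exponential generating function: its coefficient of `x^m / m!` is
`∑ N(d,e) e^{m₀} d^{m₁}` over the bidegrees with `2(d+e) − 1 = m₂`. Differentiation shifts
`m`, and multiplication is binomial convolution. For one pair of bidegrees `A`, `B` the
convolution factors over the three variables: in `x₁`, `x₂` the binomial theorem gives
`(e_A + e_B)^{m₀} (d_A + d_B)^{m₁}`, and in `x₃` a single binomial coefficient survives.
Grouping the pairs by `D = A + B`, the coefficient of `x^m / m!` in the WDVV equation is
`e_D^{m₀} d_D^{m₁}` times Kontsevich's recursion at `D`.
-/

section ExponentialGeneratingFunction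

variable {σ K : Type*} [Fintype σ] [Field K]

noncomputable def egf (g : (σ →₀ ℕ) → K) : MvPowerSeries σ K :=
  fun m => g m / ∏ i, ((m i).factorial : K)

theorem coeff_egf (g : (σ →₀ ℕ) → K) (m : σ →₀ ℕ) :
    MvPowerSeries.coeff m (egf g) = g m / ∏ i, ((m i).factorial : K) :=
  rfl

theorem prod_factorial_ne_zero [CharZero K] (m : σ →₀ ℕ) :
    ∏ i, ((m i).factorial : K) ≠ 0 :=
  prod_ne_zero_iff.mpr fun _ _ => Nat.cast_ne_zero.mpr (Nat.factorial_ne_zero _)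

theorem egf_add (f g : (σ →₀ ℕ) → K) : egf f + egf g = egf (f + g) := by
  ext m
  simp only [map_add, coeff_egf, Pi.add_apply, add_div]

theorem egf_mul [CharZero K] [DecidableEq σ] (f g : (σ →₀ ℕ) → K) :
    egf f * egf g = egf fun m => ∑ p ∈ antidiagonal m,
      (∏ i, ((m i).choose (p.1 i) : K)) * f p.1 * g p.2 := by
  ext m
  rw [MvPowerSeries.coeff_mul, coeff_egf, sum_div]
  refine sum_congr rfl fun p hp => ?_
  obtain rfl := mem_antidiagonal.mp hp
  have hfac : ∏ i, (((p.1 + p.2) i).factorial : K) = (∏ i, ((p.1 i + p.2 i).choose (p.1 i) : K))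
      * (∏ i, ((p.1 i).factorial : K)) * ∏ i, ((p.2 i).factorial : K) := by
    simp only [← prod_mul_distrib, Finsupp.add_apply]
    refine prod_congr rfl fun i _ => ?_
    rw [Nat.choose_symm_add]
    exact_mod_cast (Nat.add_choose_mul_factorial_mul_factorial _ _).symm
  have hchoose : ∏ i, ((p.1 i + p.2 i).choose (p.1 i) : K) ≠ 0 :=
    prod_ne_zero_iff.mpr fun i _ => Nat.cast_ne_zero.mpr (Nat.choose_pos (by omega)).ne'
  rw [coeff_egf, coeff_egf, hfac]
  simp only [Finsupp.add_apply]
  field_simp [prod_factorial_ne_zero]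

theorem pderiv_egf [CharZero K] [DecidableEq σ] (i : σ) (g : (σ →₀ ℕ) → K) :
    MvPowerSeries.pderiv K i (egf g) = egf fun m => g (m + Finsupp.single i 1) := by
  ext m
  rw [MvPowerSeries.coeff_pderiv, coeff_egf, coeff_egf]
  have hprod : ∏ j, (((m + Finsupp.single i 1 : σ →₀ ℕ) j).factorial : K)
      = (m i + 1) * ∏ j, ((m j).factorial : K) := by
    rw [← mul_prod_erase univ _ (mem_univ i), ← mul_prod_erase univ _ (mem_univ i),
      prod_congr rfl fun j hj => by
        rw [Finsupp.add_apply, Finsupp.single_eq_of_ne (ne_of_mem_erase hj), add_zero]]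
    simp [Nat.factorial_succ, mul_assoc]
  rw [hprod]
  field_simp [prod_factorial_ne_zero]

end ExponentialGeneratingFunction

theorem mvPDeriv_eq_pderiv (i : Fin 3) (f : MvPowerSeries (Fin 3) ℚ) :
    mvPDeriv i f = MvPowerSeries.pderiv ℚ i f := by
  ext m
  show ((m i + 1 : ℕ) : ℚ) * _ = _
  rw [MvPowerSeries.coeff_pderiv, mul_comm]
  push_cast
  rfl

theorem Finsupp.sum_antidiagonal_prod_eq_prod_sum {σ R : Type*} [Fintype σ] [DecidableEq σ]
    [CommSemiring R] (m : σ →₀ ℕ) (f : σ → ℕ → ℕ → R) :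
    ∑ p ∈ antidiagonal m, ∏ i, f i (p.1 i) (p.2 i)
      = ∏ i, ∑ q ∈ antidiagonal (m i), f i q.1 q.2 := by
  rw [prod_univ_sum]
  refine sum_nbij' (fun p i => (p.1 i, p.2 i))
    (fun x => (Finsupp.equivFunOnFinite.symm fun i => (x i).1,
      Finsupp.equivFunOnFinite.symm fun i => (x i).2)) ?_ ?_ ?_ ?_ ?_
  · intro p hp
    simp only [Fintype.mem_piFinset, HasAntidiagonal.mem_antidiagonal]
    intro i
    rw [← Finsupp.add_apply, (HasAntidiagonal.mem_antidiagonal.mp hp)]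
  · intro x hx
    simp only [Fintype.mem_piFinset] at hx
    simp only [HasAntidiagonal.mem_antidiagonal]
    ext i
    simpa using HasAntidiagonal.mem_antidiagonal.mp (hx i)
  · intro p _
    ext <;> simp
  · intro x _
    simp
  · intro p _
    rfl

theorem sum_antidiagonal_choose_mul_pow_add_mul_pow_add {R : Type*} [CommSemiring R]
    (n s t : ℕ) (u v : R) :
    ∑ q ∈ antidiagonal n, (n.choose q.1 : R) * (u ^ (q.1 + s) * v ^ (q.2 + t))
      = u ^ s * v ^ t * (u + v) ^ n := by
  rw [(Commute.all u v).add_pow', mul_sum]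
  refine sum_congr rfl fun q _ => ?_
  rw [nsmul_eq_mul]
  ring

theorem sum_antidiagonal_choose_mul_indicator {R : Type*} [CommSemiring R]
    (c s t a b : ℕ) (hs : s ≤ a) :
    ∑ q ∈ antidiagonal c, (c.choose q.1 : R) * (if q.1 + s = a ∧ q.2 + t = b then 1 else 0)
      = if a + b = c + s + t then (c.choose (a - s) : R) else 0 := by
  rw [sum_eq_single (a - s, c - (a - s))]
  · by_cases hc : a - s ≤ c
    · simp only [show a - s + s = a by omega, true_and]
      by_cases hab : a + b = c + s + t
      · rw [if_pos (by omega), if_pos hab, mul_one]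
      · rw [if_neg (by omega), if_neg hab, mul_zero]
    · simp [Nat.choose_eq_zero_of_lt (not_le.mp hc)]
  · rintro q hq hne
    rw [HasAntidiagonal.mem_antidiagonal] at hq
    rw [if_neg, mul_zero]
    rintro ⟨h1, -⟩
    exact hne (Prod.ext (by simp; omega) (by simp; omega))
  · intro hq
    rw [HasAntidiagonal.mem_antidiagonal] at hq
    rw [Nat.choose_eq_zero_of_lt (by omega), Nat.cast_zero, zero_mul]

def bidegrees (c : ℕ) : Finset (ℕ × ℕ) :=
  ((range (c + 2)) ×ˢ (range (c + 2))).filter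
    (fun p => 1 ≤ p.1 + p.2 ∧ 2 * (p.1 + p.2) - 1 = c)

def splittings (D : ℕ × ℕ) : Finset (ℕ × ℕ) :=
  ((range (D.1 + 1)) ×ˢ (range (D.2 + 1))).filter
    (fun p => 1 ≤ p.1 + p.2 ∧ 1 ≤ (D.1 - p.1) + (D.2 - p.2))

def positiveBox (K : ℕ) : Finset (ℕ × ℕ) :=
  (range K ×ˢ range K).filter (fun p => 1 ≤ p.1 + p.2)

theorem mem_bidegrees {c : ℕ} {p : ℕ × ℕ} :
    p ∈ bidegrees c ↔ 1 ≤ p.1 + p.2 ∧ 2 * (p.1 + p.2) - 1 = c := by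
  simp only [bidegrees, mem_filter, mem_product, mem_range, and_iff_right_iff_imp]
  omega

theorem sum_positiveBox_sum_positiveBox_ite {M : Type*} [AddCommMonoid M] (c : ℕ)
    (F : ℕ × ℕ → ℕ × ℕ → M) :
    ∑ A ∈ positiveBox (c + 4), ∑ B ∈ positiveBox (c + 4),
      (if 2 * (A.1 + A.2) - 1 + (2 * (B.1 + B.2) - 1) = c + 2 then F A B else 0)
      = ∑ D ∈ bidegrees (c + 3), ∑ A ∈ splittings D, F A (D.1 - A.1, D.2 - A.2) := by
  rw [← sum_product' (f := fun A B =>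
    if 2 * (A.1 + A.2) - 1 + (2 * (B.1 + B.2) - 1) = c + 2 then F A B else 0), ← sum_filter,
    sum_sigma']
  refine sum_nbij' (fun q => ⟨(q.1.1 + q.2.1, q.1.2 + q.2.2), q.1⟩)
    (fun x => (x.2, (x.1.1 - x.2.1, x.1.2 - x.2.2))) ?_ ?_ ?_ ?_ ?_
  · rintro ⟨⟨a₁, a₂⟩, ⟨b₁, b₂⟩⟩ h
    simp only [positiveBox, bidegrees, splittings, mem_product, mem_range, mem_sigma,
      mem_filter] at h ⊢
    omega
  · rintro ⟨⟨d₁, d₂⟩, ⟨a₁, a₂⟩⟩ h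
    simp only [positiveBox, bidegrees, splittings, mem_product, mem_range, mem_sigma,
      mem_filter] at h ⊢
    omega
  · rintro ⟨⟨a₁, a₂⟩, ⟨b₁, b₂⟩⟩ -
    simp
  · rintro ⟨⟨d₁, d₂⟩, ⟨a₁, a₂⟩⟩ h
    simp only [bidegrees, splittings, mem_sigma, mem_filter, mem_product,
      mem_range] at h
    simp only [Nat.add_sub_cancel' (by omega : a₁ ≤ d₁),
      Nat.add_sub_cancel' (by omega : a₂ ≤ d₂)]
  · rintro ⟨⟨a₁, a₂⟩, ⟨b₁, b₂⟩⟩ -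
    simp

/-- The coefficient function of `x₃^a / a! · exp (u x₁ + v x₂)` with respect to `egf`. -/
noncomputable def expMonomial (a : ℕ) (u v : ℚ) (m : Fin 3 →₀ ℕ) : ℚ :=
  if m 2 = a then u ^ m 0 * v ^ m 1 else 0

theorem sum_antidiagonal_choose_mul_expMonomial_mul_expMonomial (m s t : Fin 3 →₀ ℕ)
    (a b : ℕ) (u v u' v' : ℚ) (hs : s 2 ≤ a) :
    ∑ p ∈ antidiagonal m, (∏ i, ((m i).choose (p.1 i) : ℚ)) *
        expMonomial a u v (p.1 + s) * expMonomial b u' v' (p.2 + t)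
      = (if a + b = m 2 + s 2 + t 2 then ((m 2).choose (a - s 2) : ℚ) else 0) *
        (u ^ s 0 * u' ^ t 0 * (u + u') ^ m 0) * (v ^ s 1 * v' ^ t 1 * (v + v') ^ m 1) := by
  let f : Fin 3 → ℕ → ℕ → ℚ := ![
    fun x y => (m 0).choose x * (u ^ (x + s 0) * u' ^ (y + t 0)),
    fun x y => (m 1).choose x * (v ^ (x + s 1) * v' ^ (y + t 1)),
    fun x y => (m 2).choose x * (if x + s 2 = a ∧ y + t 2 = b then 1 else 0)]
  calc _ = ∑ p ∈ antidiagonal m, ∏ i, f i (p.1 i) (p.2 i) := by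
        refine sum_congr rfl fun p _ => ?_
        simp only [expMonomial, Fin.prod_univ_three, Finsupp.add_apply, f, Matrix.cons_val]
        by_cases h₁ : p.1 2 + s 2 = a <;> by_cases h₂ : p.2 2 + t 2 = b <;> simp [h₁, h₂]
        ring
    _ = ∏ i, ∑ q ∈ antidiagonal (m i), f i q.1 q.2 :=
        Finsupp.sum_antidiagonal_prod_eq_prod_sum m f
    _ = _ := by
        simp only [Fin.prod_univ_three, f, Matrix.cons_val,
          sum_antidiagonal_choose_mul_pow_add_mul_pow_add,
          sum_antidiagonal_choose_mul_indicator _ _ _ _ _ hs]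
        ring

noncomputable def gammaCoeff (N : ℕ → ℕ → ℚ) (m : Fin 3 →₀ ℕ) : ℚ :=
  ∑ A ∈ bidegrees (m 2), N A.1 A.2 * (A.2 : ℚ) ^ m 0 * (A.1 : ℚ) ^ m 1

theorem gammaP1xP1_eq_egf (N : ℕ → ℕ → ℚ) : GammaP1xP1 N = egf (gammaCoeff N) := by
  ext m
  rw [coeff_egf, Fin.prod_univ_three, gammaCoeff, sum_div]
  rfl

/- Over a box independent of `m`, the sums defining `gammaCoeff` commute with the convolution
sum of `egf_mul`. -/
theorem gammaCoeff_eq_sum_positiveBox (N : ℕ → ℕ → ℚ) (m : Fin 3 →₀ ℕ) {K : ℕ}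
    (hK : m 2 + 2 ≤ K) :
    gammaCoeff N m
      = ∑ A ∈ positiveBox K, N A.1 A.2 * expMonomial (2 * (A.1 + A.2) - 1) A.2 A.1 m := by
  have hfilter :
      bidegrees (m 2) = (positiveBox K).filter (fun A => m 2 = 2 * (A.1 + A.2) - 1) := by
    ext A
    simp only [bidegrees, positiveBox, mem_filter, mem_product, mem_range]
    omega
  rw [gammaCoeff, hfilter, sum_filter]
  refine sum_congr rfl fun A _ => ?_
  rw [expMonomial, mul_ite, mul_zero, mul_assoc]

theorem gammaCoeff_add_single_two_three (N : ℕ → ℕ → ℚ) (m : Fin 3 →₀ ℕ) :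
    gammaCoeff N (m + (Finsupp.single 2 1 + Finsupp.single 2 1 + Finsupp.single 2 1))
      = ∑ D ∈ bidegrees (m 2 + 3), (D.2 : ℚ) ^ m 0 * (D.1 : ℚ) ^ m 1 * N D.1 D.2 := by
  simp only [gammaCoeff, Finsupp.coe_add, Pi.add_apply, Finsupp.single_eq_same,
    Finsupp.single_eq_of_ne (show (0 : Fin 3) ≠ 2 by decide),
    Finsupp.single_eq_of_ne (show (1 : Fin 3) ≠ 2 by decide)]
  exact sum_congr rfl fun D _ => by ring

/-- The part of the coefficient of `∂ˢΓ · ∂ᵗΓ` coming from the splittings `D = A + B`,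
with the `exp ((e_A + e_B) x₁ + (d_A + d_B) x₂)` factor removed. -/
noncomputable def splitSum (N : ℕ → ℕ → ℚ) (D : ℕ × ℕ) (s t : Fin 3 →₀ ℕ) : ℚ :=
  ∑ A ∈ splittings D,
    ((2 * D.1 + 2 * D.2 - 4).choose (2 * A.1 + 2 * A.2 - 1 - s 2) : ℚ) *
      N A.1 A.2 * N (D.1 - A.1) (D.2 - A.2) *
    ((A.2 : ℚ) ^ s 0 * (A.1 : ℚ) ^ s 1 *
      ((D.2 - A.2 : ℕ) : ℚ) ^ t 0 * ((D.1 - A.1 : ℕ) : ℚ) ^ t 1)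

theorem sum_antidiagonal_choose_mul_gammaCoeff_mul_gammaCoeff (N : ℕ → ℕ → ℚ)
    (m s t : Fin 3 →₀ ℕ) (hs : s 2 ≤ 1) (hst : s 2 + t 2 = 2) :
    ∑ p ∈ antidiagonal m, (∏ i, ((m i).choose (p.1 i) : ℚ)) *
        gammaCoeff N (p.1 + s) * gammaCoeff N (p.2 + t)
      = ∑ D ∈ bidegrees (m 2 + 3),
          (D.2 : ℚ) ^ m 0 * (D.1 : ℚ) ^ m 1 * splitSum N D s t := by
  have hbox : ∀ p ∈ antidiagonal m,
      (p.1 + s) 2 + 2 ≤ m 2 + 4 ∧ (p.2 + t) 2 + 2 ≤ m 2 + 4 := by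
    intro p hp
    have := congrArg (· 2) (HasAntidiagonal.mem_antidiagonal.mp hp)
    simp only [Finsupp.add_apply] at this ⊢
    omega
  let F : ℕ × ℕ → ℕ × ℕ → ℚ := fun A B =>
    N A.1 A.2 * N B.1 B.2 * ((m 2).choose (2 * (A.1 + A.2) - 1 - s 2) : ℚ) *
      ((A.2 : ℚ) ^ s 0 * (B.2 : ℚ) ^ t 0 * ((A.2 : ℚ) + B.2) ^ m 0) *
      ((A.1 : ℚ) ^ s 1 * (B.1 : ℚ) ^ t 1 * ((A.1 : ℚ) + B.1) ^ m 1)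
  calc _ = ∑ A ∈ positiveBox (m 2 + 4), ∑ B ∈ positiveBox (m 2 + 4), N A.1 A.2 * N B.1 B.2 *
          ∑ p ∈ antidiagonal m, (∏ i, ((m i).choose (p.1 i) : ℚ)) *
            expMonomial (2 * (A.1 + A.2) - 1) A.2 A.1 (p.1 + s) *
            expMonomial (2 * (B.1 + B.2) - 1) B.2 B.1 (p.2 + t) := by
        rw [sum_congr rfl fun p hp => by rw [gammaCoeff_eq_sum_positiveBox N _ (hbox p hp).1,
          gammaCoeff_eq_sum_positiveBox N _ (hbox p hp).2]]
        simp only [mul_sum, sum_mul]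
        conv_lhs => rw [sum_comm, sum_congr rfl fun _ _ => sum_comm, sum_comm]
        exact sum_congr rfl fun A _ => sum_congr rfl fun B _ =>
          sum_congr rfl fun p _ => by ring
    _ = ∑ A ∈ positiveBox (m 2 + 4), ∑ B ∈ positiveBox (m 2 + 4),
          if 2 * (A.1 + A.2) - 1 + (2 * (B.1 + B.2) - 1) = m 2 + 2 then F A B else 0 := by
        refine sum_congr rfl fun A hA => sum_congr rfl fun B _ => ?_
        have hA : 1 ≤ A.1 + A.2 := (mem_filter.mp hA).2
        rw [sum_antidiagonal_choose_mul_expMonomial_mul_expMonomial _ _ _ _ _ _ _ _ _ (by omega),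
          add_assoc (m 2), hst]
        split_ifs
        · ring
        · simp
    _ = ∑ D ∈ bidegrees (m 2 + 3), ∑ A ∈ splittings D, F A (D.1 - A.1, D.2 - A.2) :=
        sum_positiveBox_sum_positiveBox_ite _ F
    _ = _ := by
        refine sum_congr rfl fun D hD => ?_
        rw [splitSum, mul_sum]
        refine sum_congr rfl fun A hA => ?_
        simp only [splittings, mem_filter, mem_product, mem_range] at hA
        have hc : m 2 = 2 * D.1 + 2 * D.2 - 4 := by
          have := mem_bidegrees.mp hD
          omega
        have h₁ : (A.1 : ℚ) + ((D.1 - A.1 : ℕ) : ℚ) = D.1 := by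
          rw [← Nat.cast_add, Nat.add_sub_cancel' (by omega)]
        have h₂ : (A.2 : ℚ) + ((D.2 - A.2 : ℕ) : ℚ) = D.2 := by
          rw [← Nat.cast_add, Nat.add_sub_cancel' (by omega)]
        simp only [F, h₁, h₂, hc, mul_add]
        ring

theorem pderiv_pderiv_pderiv_egf {σ : Type*} [Fintype σ] [DecidableEq σ] (i j k : σ)
    (g : (σ →₀ ℕ) → ℚ) :
    MvPowerSeries.pderiv ℚ i (MvPowerSeries.pderiv ℚ j (MvPowerSeries.pderiv ℚ k (egf g)))
      = egf fun m => g (m + (Finsupp.single i 1 + Finsupp.single j 1 + Finsupp.single k 1)) := by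
  simp only [pderiv_egf, add_assoc]

open Finsupp (single) in
theorem KontsevichRecursionP1xP1.splitSum_wdvv {N : ℕ → ℕ → ℚ}
    (hN : KontsevichRecursionP1xP1 N) (D : ℕ × ℕ) (hD : 2 ≤ D.1 + D.2) :
    N D.1 D.2
        + splitSum N D (single 0 1 + single 0 1 + single 1 1)
            (single 1 1 + single 2 1 + single 2 1)
        + splitSum N D (single 0 1 + single 1 1 + single 1 1)
            (single 0 1 + single 2 1 + single 2 1)
      = splitSum N D (single 0 1 + single 1 1 + single 2 1)
            (single 0 1 + single 1 1 + single 2 1)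
        + splitSum N D (single 1 1 + single 1 1 + single 2 1)
            (single 0 1 + single 0 1 + single 2 1) := by
  obtain ⟨-, -, hrec⟩ := hN
  have h : N D.1 D.2 + ∑ A ∈ splittings D, _ = ∑ A ∈ splittings D, _ := hrec D.1 D.2 hD
  rw [add_assoc, splitSum, splitSum, splitSum, splitSum, ← sum_add_distrib, ← sum_add_distrib]
  convert h using 3 <;> simp [Nat.sub_sub] <;> ring

/-- WDVV equation for `ℙ¹×ℙ¹`: if `N` satisfies Kontsevich's recursion, then the third
partial derivatives `Γ_{ijk}` of the quantum potential `Γ` satisfy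
`Γ₃₃₃ + Γ₁₁₂·Γ₂₃₃ + Γ₁₂₂·Γ₁₃₃ = Γ₁₂₃·Γ₁₂₃ + Γ₂₂₃·Γ₁₁₃`
(variables `x₁, x₂, x₃` are indexed by `0, 1, 2 : Fin 3`). -/
theorem kontsevich_p1xp1_wdvv (N : ℕ → ℕ → ℚ) (hN : KontsevichRecursionP1xP1 N) :
    mvPDeriv 2 (mvPDeriv 2 (mvPDeriv 2 (GammaP1xP1 N)))
      + mvPDeriv 0 (mvPDeriv 0 (mvPDeriv 1 (GammaP1xP1 N)))
        * mvPDeriv 1 (mvPDeriv 2 (mvPDeriv 2 (GammaP1xP1 N)))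
      + mvPDeriv 0 (mvPDeriv 1 (mvPDeriv 1 (GammaP1xP1 N)))
        * mvPDeriv 0 (mvPDeriv 2 (mvPDeriv 2 (GammaP1xP1 N)))
    = mvPDeriv 0 (mvPDeriv 1 (mvPDeriv 2 (GammaP1xP1 N)))
        * mvPDeriv 0 (mvPDeriv 1 (mvPDeriv 2 (GammaP1xP1 N)))
      + mvPDeriv 1 (mvPDeriv 1 (mvPDeriv 2 (GammaP1xP1 N)))
        * mvPDeriv 0 (mvPDeriv 0 (mvPDeriv 2 (GammaP1xP1 N))) := by
  simp only [mvPDeriv_eq_pderiv, gammaP1xP1_eq_egf, pderiv_pderiv_pderiv_egf, egf_mul, egf_add]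
  refine congrArg egf (funext fun m => ?_)
  simp only [Pi.add_apply]
  rw [gammaCoeff_add_single_two_three, sum_antidiagonal_choose_mul_gammaCoeff_mul_gammaCoeff N m,
    sum_antidiagonal_choose_mul_gammaCoeff_mul_gammaCoeff N m,
    sum_antidiagonal_choose_mul_gammaCoeff_mul_gammaCoeff N m,
    sum_antidiagonal_choose_mul_gammaCoeff_mul_gammaCoeff N m]
  · simp only [← sum_add_distrib]
    refine sum_congr rfl fun D hD => ?_
    have := mem_bidegrees.mp hD
    linear_combination ((D.2 : ℚ) ^ m 0 * (D.1 : ℚ) ^ m 1) * hN.splitSum_wdvv D (by omega)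
  all_goals simp
end
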